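/- Let R be an associative ring with 1, n ≥ 3, and A, B two-sided ideals. Then [E(n,A), E(n,B)] ⊆ GL(n,R, A∘B), where A∘B = AB + BA and GL(n,R,I) is the principal congruence subgroup of level I (matrices congruent to the identity modulo I). -/

import Mathlib

open Matrix

/-- `GL(n,R)` over an associative ring `R` with `1`, as units of the matrix ring. -/
abbrev GLn (n : ℕ) (R : Type*) [Ring R] := (Matrix (Fin n) (Fin n) R)ˣ

/-- The elementary transvection `t_{ij}(c) = e + c·e_{ij}`, for `i ≠ j`. -/
def t {R : Type*} [Ring R] {n : ℕ} (i j : Fin n) (hij : i ≠ j) (c : R) :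
    GLn n R :=
  ⟨1 + Matrix.single i j c, 1 - Matrix.single i j c,
   by
    have h0 : single i j c * single i j c = 0 :=
      single_mul_single_of_ne c i j i hij.symm c
    noncomm_ring
    simp [h0],
   by
    have h0 : single i j c * single i j c = 0 :=
      single_mul_single_of_ne c i j i hij.symm c
    noncomm_ring
    simp [h0]⟩

/-- The (unrelative) elementary subgroup `E(n,A)` generated by `t_{ij}(a)`, `a ∈ A`. -/
def E (R : Type*) [Ring R] (n : ℕ) (A : TwoSidedIdeal R) : Subgroup (GLn n R) :=
  Subgroup.closure { g | ∃ i j, ∃ hij : i ≠ j, ∃ a ∈ A, g = t i j hij a }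

/-- The symmetrised product `A∘B = AB + BA` of two-sided ideals. -/
def symProd {R : Type*} [Ring R] (A B : TwoSidedIdeal R) : TwoSidedIdeal R :=
  TwoSidedIdeal.span {x | ∃ a ∈ A, ∃ b ∈ B, x = a * b ∨ x = b * a}

namespace Aux10

variable {R : Type*} [Ring R] {n : ℕ}

/-- entrywise membership in an ideal -/
def memI (I : TwoSidedIdeal R) (M : Matrix (Fin n) (Fin n) R) : Prop :=
  ∀ i j, M i j ∈ I

lemma memI.add {I : TwoSidedIdeal R} {M N : Matrix (Fin n) (Fin n) R}
    (hM : memI I M) (hN : memI I N) : memI I (M + N) := fun i j => by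
  simpa using I.add_mem (hM i j) (hN i j)

lemma memI.mul_left {I : TwoSidedIdeal R} {N : Matrix (Fin n) (Fin n) R}
    (M : Matrix (Fin n) (Fin n) R) (hN : memI I N) : memI I (M * N) := fun i j => by
  rw [Matrix.mul_apply]
  exact sum_mem (fun k _ => I.mul_mem_left _ _ (hN k j))

lemma memI.mul_right {I : TwoSidedIdeal R} {M : Matrix (Fin n) (Fin n) R}
    (hM : memI I M) (N : Matrix (Fin n) (Fin n) R) : memI I (M * N) := fun i j => by
  rw [Matrix.mul_apply]
  exact sum_mem (fun k _ => I.mul_mem_right _ _ (hM i k))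

lemma memI.neg {I : TwoSidedIdeal R} {M : Matrix (Fin n) (Fin n) R}
    (hM : memI I M) : memI I (-M) := fun i j => by
  simpa using I.neg_mem (hM i j)

/-- the principal congruence subgroup -/
def CSub (I : TwoSidedIdeal R) : Subgroup (GLn n R) where
  carrier := {g | memI I (g.val - 1)}
  one_mem' := by simp [memI]
  mul_mem' := by
    intro g h hg hh
    have : (g * h).val - 1 = (g.val - 1) * (h.val - 1) + ((g.val - 1) + (h.val - 1)) := by
      push_cast
      noncomm_ring
    rw [Set.mem_setOf_eq, this]
    exact (memI.mul_left _ hh).add (hg.add hh)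
  inv_mem' := by
    intro g hg
    have : (g⁻¹).val - 1 = (g⁻¹).val * (-(g.val - 1)) := by
      rw [mul_neg, mul_sub, mul_one, Units.inv_mul]
      abel
    rw [Set.mem_setOf_eq, this]
    exact memI.mul_left _ hg.neg

lemma E_le_CSub (A : TwoSidedIdeal R) : E R n A ≤ CSub A := by
  rw [E, Subgroup.closure_le]
  rintro g ⟨i, j, hij, a, ha, rfl⟩
  intro k l
  have h1 : ((t i j hij a).val - 1) k l = single i j a k l := by
    simp [t]
  rw [h1, Matrix.single]
  simp only [Matrix.of_apply]
  split_ifs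
  · exact ha
  · exact A.zero_mem

lemma mul_mem_symProd {A B : TwoSidedIdeal R} {a b : R} (ha : a ∈ A) (hb : b ∈ B) :
    a * b ∈ symProd A B :=
  TwoSidedIdeal.subset_span ⟨a, ha, b, hb, Or.inl rfl⟩

lemma mul_mem_symProd' {A B : TwoSidedIdeal R} {a b : R} (ha : a ∈ A) (hb : b ∈ B) :
    b * a ∈ symProd A B :=
  TwoSidedIdeal.subset_span ⟨a, ha, b, hb, Or.inr rfl⟩

end Aux10

theorem stmt10 {R : Type*} [Ring R] {n : ℕ} (hn : 3 ≤ n) (A B : TwoSidedIdeal R)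
    (g : GLn n R) (hg : g ∈ ⁅E R n A, E R n B⁆) (i j : Fin n) :
    g.val i j - (1 : Matrix (Fin n) (Fin n) R) i j ∈ symProd A B := by
  open scoped commutatorElement in
  have key : ⁅E R n A, E R n B⁆ ≤ Aux10.CSub (symProd A B) := by
    rw [Subgroup.commutator_le]
    intro g hg h hh
    have hga : Aux10.memI A (g.val - 1) := Aux10.E_le_CSub A hg
    have hhb : Aux10.memI B (h.val - 1) := Aux10.E_le_CSub B hh
    show Aux10.memI (symProd A B) ((⁅g, h⁆).val - 1)
    have habc : Aux10.memI (symProd A B)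
        ((g.val - 1) * (h.val - 1) - (h.val - 1) * (g.val - 1)) := by
      intro k l
      rw [Matrix.sub_apply, Matrix.mul_apply, Matrix.mul_apply, ← Finset.sum_sub_distrib]
      refine sum_mem (fun m _ => ?_)
      exact (symProd A B).sub_mem (Aux10.mul_mem_symProd (hga k m) (hhb m l))
        (Aux10.mul_mem_symProd' (hga m l) (hhb k m))
    have h1 : (g.val - 1) * (h.val - 1) - (h.val - 1) * (g.val - 1)
        = g.val * h.val - h.val * g.val := by noncomm_ring
    have hcomm : ⁅g, h⁆ = (g * h) * (h * g)⁻¹ := by group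
    have heq : (⁅g, h⁆).val - 1 =
        (g.val * h.val - h.val * g.val) * ((h * g)⁻¹).val := by
      have heq' : ((g * h) * (h * g)⁻¹).val - 1
          = ((g * h).val - (h * g).val) * ((h * g)⁻¹).val := by
        rw [Units.val_mul, sub_mul, Units.mul_inv]
      rw [hcomm, heq', Units.val_mul, Units.val_mul]
    rw [heq, ← h1]
    exact Aux10.memI.mul_right habc _
  have := key hg i j
  rwa [Matrix.sub_apply] at this
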